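/- arXiv:2410.13554 — 6 statements merged into one kernel-verified Lean document; each statement's English description precedes it below -/
import Mathlib

section
/- Let A be a finite set and k a field. If Φ and Ψ are two set-theoretically independent collections of vectors in k^A (i.e., the supports of the vectors within each collection are pairwise disjoint) that are unrelated (i.e., no nonempty subcollections Φ' ⊆ Φ and Ψ' ⊆ Ψ have equal unions of supports), then the union Φ ∪ Ψ is a linearly independent set of vectors. -/
variable {A : Type*} [Fintype A] {k : Type*} [Field k] [DecidableEq (A → k)]

/-- A finite collection of vectors in `k^A` is set-theoretically independent if all its
members are nonzero and their supports are pairwise disjoint. -/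
def SetTheoreticallyIndependent (Φ : Finset (A → k)) : Prop :=
  (∀ φ ∈ Φ, φ ≠ 0) ∧
    (Φ : Set (A → k)).Pairwise fun φ ψ => Disjoint (Function.support φ) (Function.support ψ)

/-- The union of the supports of the members of a collection. -/
def SupportUnion (Φ : Finset (A → k)) : Set A := ⋃ φ ∈ Φ, Function.support φ

/-- Two collections are unrelated if no nonempty subcollections of each have equal
unions of supports. -/
def Unrelated (Φ Ψ : Finset (A → k)) : Prop :=
  ¬ ∃ Φ' Ψ' : Finset (A → k), Φ' ⊆ Φ ∧ Ψ' ⊆ Ψ ∧ Φ'.Nonempty ∧ Ψ'.Nonempty ∧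
      SupportUnion Φ' = SupportUnion Ψ'

lemma supp_sum_eq (Φ : Finset (A → k))
    (hΦ : (Φ : Set (A → k)).Pairwise fun φ ψ => Disjoint (Function.support φ) (Function.support ψ))
    (c : (A → k) → k) [DecidablePred fun φ : A → k => c φ ≠ 0] :
    Function.support (∑ φ ∈ Φ, c φ • φ) = SupportUnion (Φ.filter fun φ => c φ ≠ 0) := by
  ext a
  simp only [SupportUnion, Set.mem_iUnion, Finset.mem_filter, Function.mem_support,
    Finset.sum_apply, Pi.smul_apply, smul_eq_mul]
  constructor
  · intro hne
    obtain ⟨φ, hφ, h0⟩ := Finset.exists_ne_zero_of_sum_ne_zero hne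
    exact ⟨φ, ⟨hφ, fun hc => h0 (by simp [hc])⟩, fun ha => h0 (by simp [ha])⟩
  · rintro ⟨φ0, ⟨hφ0, hc⟩, ha⟩
    have hsum : ∑ φ ∈ Φ, c φ * φ a = c φ0 * φ0 a := by
      apply Finset.sum_eq_single_of_mem φ0 hφ0
      intro φ hφ hne
      have hd := hΦ hφ hφ0 hne
      have hz : φ a = 0 := by
        by_contra hh
        exact Set.disjoint_left.mp hd hh ha
      simp [hz]
    rw [hsum]
    exact mul_ne_zero hc ha

theorem stmt0 (Φ Ψ : Finset (A → k))
    (hΦ : SetTheoreticallyIndependent Φ) (hΨ : SetTheoreticallyIndependent Ψ)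
    (h : Unrelated Φ Ψ) :
    LinearIndependent k (Subtype.val : ((Φ ∪ Ψ : Finset (A → k)) : Set (A → k)) → (A → k)) := by
  classical
  have hdisj : Disjoint Φ Ψ := by
    rw [Finset.disjoint_left]
    intro φ hφ hψ
    exact h ⟨{φ}, {φ}, Finset.singleton_subset_iff.mpr hφ,
      Finset.singleton_subset_iff.mpr hψ, Finset.singleton_nonempty φ,
      Finset.singleton_nonempty φ, rfl⟩
  rw [Fintype.linearIndependent_iff]
  intro g hg i
  set c : (A → k) → k := fun x => if hx : x ∈ Φ ∪ Ψ then g ⟨x, hx⟩ else 0 with hc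
  have hci : ∀ i : ((Φ ∪ Ψ : Finset (A → k)) : Set (A → k)), c i = g i := by
    rintro ⟨x, hx⟩
    exact dif_pos hx
  have hsum0 : ∑ x ∈ Φ ∪ Ψ, c x • x = 0 := by
    rw [← Finset.sum_coe_sort (Φ ∪ Ψ) (fun x => c x • x)]
    calc ∑ i : ((Φ ∪ Ψ : Finset (A → k)) : Set (A → k)), c i • (i : A → k)
        = ∑ i : ((Φ ∪ Ψ : Finset (A → k)) : Set (A → k)), g i • (i : A → k) :=
          Finset.sum_congr rfl fun i _ => by rw [hci]
      _ = 0 := hg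
  rw [Finset.sum_union hdisj] at hsum0
  have heq : (∑ φ ∈ Φ, c φ • φ) = ∑ ψ ∈ Ψ, (fun x => -c x) ψ • ψ := by
    have h' := eq_neg_of_add_eq_zero_left hsum0
    rw [h']
    rw [← Finset.sum_neg_distrib]
    exact Finset.sum_congr rfl fun ψ _ => by simp [neg_smul]
  have h1 := supp_sum_eq Φ hΦ.2 c
  have h2 := supp_sum_eq Ψ hΨ.2 (fun x => -c x)
  have hfe : (Ψ.filter fun ψ => (fun x => -c x) ψ ≠ 0) = Ψ.filter fun ψ => c ψ ≠ 0 :=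
    Finset.filter_congr fun ψ _ => by simp
  set Φ' := Φ.filter fun φ => c φ ≠ 0 with hΦ'
  set Ψ' := Ψ.filter fun ψ => c ψ ≠ 0 with hΨ'
  have hSU : SupportUnion Φ' = SupportUnion Ψ' := by
    rw [← h1, heq, h2, hfe]
  have hne : ¬ (Φ'.Nonempty ∧ Ψ'.Nonempty) := fun ⟨hn1, hn2⟩ =>
    h ⟨Φ', Ψ', Finset.filter_subset _ _, Finset.filter_subset _ _, hn1, hn2, hSU⟩
  have hΦ'e : Φ' = ∅ := by
    rw [← Finset.not_nonempty_iff_eq_empty]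
    rintro ⟨φ0, hφ0⟩
    have hm := Finset.mem_filter.mp hφ0
    obtain ⟨a, ha⟩ := Function.support_nonempty_iff.mpr (hΦ.1 φ0 hm.1)
    have haU : a ∈ SupportUnion Φ' := Set.mem_biUnion hφ0 ha
    rw [hSU] at haU
    obtain ⟨_, ⟨ψ0, rfl⟩, _, ⟨hψ0, rfl⟩, _⟩ := haU
    exact hne ⟨⟨φ0, hφ0⟩, ⟨ψ0, hψ0⟩⟩
  have hΨ'e : Ψ' = ∅ := by
    rw [← Finset.not_nonempty_iff_eq_empty]
    rintro ⟨ψ0, hψ0⟩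
    have hm := Finset.mem_filter.mp hψ0
    obtain ⟨a, ha⟩ := Function.support_nonempty_iff.mpr (hΨ.1 ψ0 hm.1)
    have haU : a ∈ SupportUnion Ψ' := Set.mem_biUnion hψ0 ha
    rw [← hSU] at haU
    obtain ⟨_, ⟨φ0, rfl⟩, _, ⟨hφ0, rfl⟩, _⟩ := haU
    exact hne ⟨⟨φ0, hφ0⟩, ⟨ψ0, hψ0⟩⟩
  have hczero : ∀ x ∈ Φ ∪ Ψ, c x = 0 := by
    intro x hx
    rcases Finset.mem_union.mp hx with hx' | hx'
    · by_contra hcx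
      exact Finset.notMem_empty x (hΦ'e ▸ Finset.mem_filter.mpr ⟨hx', hcx⟩)
    · by_contra hcx
      exact Finset.notMem_empty x (hΨ'e ▸ Finset.mem_filter.mpr ⟨hx', hcx⟩)
  rw [← hci i]
  exact hczero i i.2
end

section
/- Let A be a finite set and k a field. If Φ and Ψ are set-theoretically independent collections in k^A that are properly unrelated, then for every φ ∈ Φ, the collection (Φ ∪ Ψ) \ {φ} is linearly independent. -/
variable {A : Type*} [Fintype A] {k : Type*} [Field k] [DecidableEq (A → k)]

/-- Two collections are properly unrelated if any two nonempty subcollections, not both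
equal to the full collections, have distinct unions of supports. -/
def ProperlyUnrelated (Φ Ψ : Finset (A → k)) : Prop :=
  ∀ Φ' Ψ' : Finset (A → k), Φ' ⊆ Φ → Ψ' ⊆ Ψ → Φ'.Nonempty → Ψ'.Nonempty →
    (Φ' ≠ Φ ∨ Ψ' ≠ Ψ) → SupportUnion Φ' ≠ SupportUnion Ψ'

set_option linter.unusedSectionVars false in
lemma support_sum_smul (S : Finset (A → k))
    (hdisj : (S : Set (A → k)).Pairwise fun φ ψ => Disjoint (Function.support φ) (Function.support ψ))
    (c : (A → k) → k) (hc : ∀ χ ∈ S, c χ ≠ 0) :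
    Function.support (∑ χ ∈ S, c χ • χ) = SupportUnion S := by
  ext a
  simp only [Function.mem_support, SupportUnion, Set.mem_iUnion, exists_prop]
  rw [Finset.sum_apply]
  constructor
  · intro hne
    by_contra hall
    push_neg at hall
    apply hne
    apply Finset.sum_eq_zero
    intro χ hχ
    have h0 : χ a = 0 := hall χ hχ
    simp [h0]
  · rintro ⟨χ₀, hχ₀S, hχ₀a⟩
    have hsum : ∑ χ ∈ S, (c χ • χ) a = (c χ₀ • χ₀) a := by
      apply Finset.sum_eq_single_of_mem χ₀ hχ₀S
      intro b hb hne
      have hdis := hdisj (by exact_mod_cast hb) (by exact_mod_cast hχ₀S) hne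
      have : b a = 0 := by
        by_contra hba
        exact (Set.disjoint_left.mp hdis hba) hχ₀a
      simp [this]
    rw [hsum]
    simp only [Pi.smul_apply, smul_eq_mul]
    exact mul_ne_zero (hc χ₀ hχ₀S) hχ₀a

set_option linter.unusedSectionVars false in
lemma supportUnion_nonempty (S : Finset (A → k)) (hS : S.Nonempty)
    (h0 : ∀ χ ∈ S, χ ≠ 0) : (SupportUnion S).Nonempty := by
  obtain ⟨χ, hχ⟩ := hS
  obtain ⟨a, ha⟩ := Function.support_nonempty_iff.mpr (h0 χ hχ)
  exact ⟨a, Set.mem_iUnion₂.mpr ⟨χ, hχ, ha⟩⟩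

theorem stmt1 (Φ Ψ : Finset (A → k))
    (hΦ : SetTheoreticallyIndependent Φ) (hΨ : SetTheoreticallyIndependent Ψ)
    (h : ProperlyUnrelated Φ Ψ) (φ : A → k) (hφ : φ ∈ Φ) :
    LinearIndependent k
      (Subtype.val : (((Φ ∪ Ψ).erase φ : Finset (A → k)) : Set (A → k)) → (A → k)) := by
  classical
  set T := (Φ ∪ Ψ).erase φ with hT
  rw [Fintype.linearIndependent_iff]
  intro g hg i
  -- Case: Φ and Ψ intersect
  by_cases hint : (Φ ∩ Ψ).Nonempty
  · obtain ⟨χ, hχ⟩ := hint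
    rw [Finset.mem_inter] at hχ
    have heq : ¬(({χ} : Finset (A → k)) ≠ Φ ∨ ({χ} : Finset (A → k)) ≠ Ψ) := by
      intro hne
      exact h {χ} {χ} (Finset.singleton_subset_iff.mpr hχ.1)
        (Finset.singleton_subset_iff.mpr hχ.2) ⟨χ, Finset.mem_singleton_self χ⟩
        ⟨χ, Finset.mem_singleton_self χ⟩ hne rfl
    push_neg at heq
    have hφχ : φ = χ := by
      have := hφ
      rw [← heq.1, Finset.mem_singleton] at this
      exact this
    have hiT : (↑i : A → k) ∈ (Φ ∪ Ψ).erase φ := i.2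
    obtain ⟨hne, hmem⟩ := Finset.mem_erase.mp hiT
    rw [← heq.1, ← heq.2] at hmem
    simp only [Finset.union_idempotent, Finset.mem_singleton] at hmem
    exact absurd (hmem.trans hφχ.symm) hne
  · -- Φ and Ψ disjoint
    have hdisj : Disjoint Φ Ψ := by
      rw [Finset.disjoint_iff_inter_eq_empty]
      exact Finset.not_nonempty_iff_eq_empty.mp hint
    have hφΨ : φ ∉ Ψ := fun hc => (Finset.disjoint_left.mp hdisj hφ) hc
    have hTeq : T = Φ.erase φ ∪ Ψ := by
      rw [hT, Finset.erase_union_distrib, Finset.erase_eq_of_notMem hφΨ]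
    -- extend g to a function on all vectors
    set f : (A → k) → k := fun χ => if hχ : χ ∈ T then g ⟨χ, hχ⟩ else 0 with hf
    have hsumT : ∑ χ ∈ T, f χ • χ = 0 := by
      rw [← hg]
      rw [← Finset.sum_coe_sort T (fun χ => f χ • χ)]
      apply Finset.sum_congr rfl
      intro x _
      simp [hf, x.2]
    -- the two pieces
    set P := (Φ.erase φ).filter (fun χ => f χ ≠ 0) with hP
    set Q := Ψ.filter (fun χ => f χ ≠ 0) with hQ
    have hdisjPQ : Disjoint (Φ.erase φ) Ψ :=
      Finset.disjoint_of_subset_left (Finset.erase_subset _ _) hdisj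
    have hsplit : ∑ χ ∈ P, f χ • χ + ∑ χ ∈ Q, f χ • χ = 0 := by
      rw [hP, hQ, Finset.sum_filter_of_ne (fun x _ hx => by
          intro h0; apply hx; rw [h0, zero_smul]),
        Finset.sum_filter_of_ne (fun x _ hx => by
          intro h0; apply hx; rw [h0, zero_smul]),
        ← Finset.sum_union hdisjPQ, ← hTeq, hsumT]
    have hPsub : P ⊆ Φ := (Finset.filter_subset _ _).trans (Finset.erase_subset _ _)
    have hQsub : Q ⊆ Ψ := Finset.filter_subset _ _
    have hsuppP : Function.support (∑ χ ∈ P, f χ • χ) = SupportUnion P :=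
      support_sum_smul P (hΦ.2.mono (by exact_mod_cast hPsub)) f
        (fun χ hχ => (Finset.mem_filter.mp hχ).2)
    have hsuppQ : Function.support (∑ χ ∈ Q, f χ • χ) = SupportUnion Q :=
      support_sum_smul Q (hΨ.2.mono (by exact_mod_cast hQsub)) f
        (fun χ hχ => (Finset.mem_filter.mp hχ).2)
    have hPempty : P = ∅ ∧ Q = ∅ := by
      by_cases hPne : P.Nonempty
      · by_cases hQne : Q.Nonempty
        · exfalso
          apply h P Q hPsub hQsub hPne hQne
            (Or.inl (by
              intro hc
              have hφP : φ ∈ P := hc ▸ hφ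
              exact (Finset.mem_erase.mp (Finset.mem_filter.mp hφP).1).1 rfl))
          rw [← hsuppP, ← hsuppQ]
          have heq2 : ∑ χ ∈ P, f χ • χ = -∑ χ ∈ Q, f χ • χ :=
            eq_neg_of_add_eq_zero_left hsplit
          rw [heq2]
          ext a
          simp
        · exfalso
          rw [Finset.not_nonempty_iff_eq_empty] at hQne
          have hz : ∑ χ ∈ P, f χ • χ = 0 := by
            rw [hQne] at hsplit; simpa using hsplit
          have := supportUnion_nonempty P hPne (fun χ hχ => hΦ.1 χ (hPsub hχ))
          rw [← hsuppP, hz] at this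
          simp at this
      · rw [Finset.not_nonempty_iff_eq_empty] at hPne
        refine ⟨hPne, ?_⟩
        by_contra hQe
        have hQne : Q.Nonempty := Finset.nonempty_iff_ne_empty.mpr hQe
        have hz : ∑ χ ∈ Q, f χ • χ = 0 := by
          rw [hPne] at hsplit; simpa using hsplit
        have := supportUnion_nonempty Q hQne (fun χ hχ => hΨ.1 χ (hQsub hχ))
        rw [← hsuppQ, hz] at this
        simp at this
    -- conclude f vanishes on T, so g i = 0
    have hfz : ∀ χ ∈ T, f χ = 0 := by
      intro χ hχ
      by_contra hne
      rw [hTeq, Finset.mem_union] at hχ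
      rcases hχ with h1 | h1
      · have : χ ∈ P := Finset.mem_filter.mpr ⟨h1, hne⟩
        rw [hPempty.1] at this; exact Finset.notMem_empty _ this
      · have : χ ∈ Q := Finset.mem_filter.mpr ⟨h1, hne⟩
        rw [hPempty.2] at this; exact Finset.notMem_empty _ this
    have := hfz i i.2
    simpa [hf, i.2] using this
end

section
/- Let V be a finite set, U = ⊕_{v∈V} U_v a direct sum of k-vector spaces, W ⊆ U a finite-dimensional subspace, and π = (π₁,…,π_r) an ordered partition of V with filtration F_n = π₁∪⋯∪π_n. Define W_n = proj_{π_n}(W^{F_n}), where W^{F_n} = W ∩ ⊕_{v∈F_n} U_v, and W(π) = ⊕_{n=1}^r W_n ⊆ U. Then the supermodular function ν_{W(π)} of the subspace W(π) equals the splitting (ν_W)_π = Σ_{n=1}^r (ν_W)_{F_n/F_{n−1}} of the supermodular function ν_W of W. -/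
/-!
The subspaces `W_n` are supported on the pairwise disjoint blocks `π_n`, so their sum `W(π)` is
direct, and since the block projections preserve support in `I`, intersecting with
`⊕_{v ∈ I} U_v` can be done block by block: `ν_{W(π)}(I) = Σ_n dim (W_n ∩ ⊕_{v ∈ I} U_v)`.
The `n`-th term is the image under `proj_{π_n}` of `W^{(I ∩ F_n) ∪ F_{n-1}}`, on which the kernel of
`proj_{π_n}` is `W^{F_{n-1}}`; rank–nullity turns it into `(ν_W)_{F_n/F_{n-1}}(I)`.
-/

attribute [local instance] Classical.propDecidable

variable {V : Type*} [Fintype V] {k : Type*} [Field k]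
variable {U : V → Type*} [∀ v, AddCommGroup (U v)] [∀ v, Module k (U v)]

/-- The coordinate projection of `U = ⊕_v U_v` killing the components outside `I`. -/
noncomputable def projEnd (k : Type*) [Field k] {V : Type*} (U : V → Type*)
    [∀ v, AddCommGroup (U v)] [∀ v, Module k (U v)] (I : Set V) :
    ((v : V) → U v) →ₗ[k] ((v : V) → U v) :=
  LinearMap.pi fun v => if v ∈ I then LinearMap.proj v else 0

open Module

section

omit [Fintype V]

theorem Submodule.finrank_map_add_finrank_inf_ker {K M N : Type*} [Field K] [AddCommGroup M]
    [Module K M] [AddCommGroup N] [Module K N] (f : M →ₗ[K] N) (p : Submodule K M)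
    [FiniteDimensional K p] :
    finrank K (p.map f) + finrank K ↥(p ⊓ LinearMap.ker f) = finrank K p := by
  have hker : LinearMap.ker (f.domRestrict p) = (p ⊓ LinearMap.ker f).comap p.subtype := by
    rw [LinearMap.ker_domRestrict, Submodule.comap_inf, Submodule.comap_subtype_self, top_inf_eq]
  rw [← (f.domRestrict p).finrank_range_add_finrank_ker, LinearMap.range_domRestrict, hker,
    (Submodule.comapSubtypeEquivOfLe inf_le_left).finrank_eq]

variable (k U) in
/-- `⊕_{v ∈ I} U_v`, so that `W ⊓ supported k U I` is the paper's `W^I`. -/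
def supported (I : Set V) : Submodule k ((v : V) → U v) :=
  Submodule.pi Iᶜ fun _ => ⊥

section supported

variable {I A B : Set V} {x : (v : V) → U v}

lemma mem_supported : x ∈ supported k U I ↔ ∀ v ∉ I, x v = 0 := by
  simp [supported]

lemma projEnd_apply (I : Set V) (x : (v : V) → U v) (v : V) :
    projEnd k U I x v = if v ∈ I then x v else 0 := by
  rw [projEnd, LinearMap.pi_apply]
  split_ifs <;> simp

lemma ker_projEnd (I : Set V) : LinearMap.ker (projEnd k U I) = supported k U Iᶜ := by
  ext x
  simp [mem_supported, funext_iff, projEnd_apply]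

lemma supported_mono (h : A ⊆ B) : supported k U A ≤ supported k U B :=
  fun _ hx => mem_supported.2 fun v hv => mem_supported.1 hx v (fun hA => hv (h hA))

lemma supported_inf_supported : supported k U A ⊓ supported k U B = supported k U (A ∩ B) := by
  ext x
  simp only [Submodule.mem_inf, mem_supported, Set.mem_inter_iff, not_and_or]
  grind

lemma disjoint_supported (h : Disjoint A B) : Disjoint (supported k U A) (supported k U B) := by
  rw [disjoint_iff, supported_inf_supported, h.inter_eq, eq_bot_iff]
  exact fun x hx => funext fun v => mem_supported.1 hx v (Set.notMem_empty v)

lemma projEnd_mem_supported : projEnd k U A x ∈ supported k U A :=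
  mem_supported.2 fun v hv => by rw [projEnd_apply, if_neg hv]

lemma projEnd_mem_supported_of_mem (hx : x ∈ supported k U I) :
    projEnd k U A x ∈ supported k U I :=
  mem_supported.2 fun v hv => by rw [projEnd_apply, mem_supported.1 hx v hv, ite_self]

lemma projEnd_eq_self_of_mem (hx : x ∈ supported k U A) : projEnd k U A x = x :=
  funext fun v => by
    rw [projEnd_apply]
    split_ifs with hv
    · rfl
    · exact (mem_supported.1 hx v hv).symm

lemma projEnd_eq_zero_of_mem (hx : x ∈ supported k U B) (h : Disjoint A B) :
    projEnd k U A x = 0 :=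
  funext fun v => by
    rw [projEnd_apply]
    split_ifs with hv
    · exact mem_supported.1 hx v (Set.disjoint_left.1 h hv)
    · rfl

lemma map_projEnd_inf_supported (p : Submodule k ((v : V) → U v)) :
    p.map (projEnd k U B) ⊓ supported k U I
      = (p ⊓ supported k U (I ∪ Bᶜ)).map (projEnd k U B) := by
  apply le_antisymm
  · rintro _ ⟨⟨w, hw, rfl⟩, hI⟩
    refine ⟨w, ⟨hw, mem_supported.2 fun v hv => ?_⟩, rfl⟩
    simp only [Set.mem_union, Set.mem_compl_iff, not_or, not_not] at hv
    simpa [projEnd_apply, hv.2] using mem_supported.1 hI v hv.1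
  · rintro _ ⟨w, ⟨hw, hwI⟩, rfl⟩
    refine ⟨⟨w, hw, rfl⟩, mem_supported.2 fun v hv => ?_⟩
    rw [projEnd_apply]
    split_ifs with hB
    · exact mem_supported.1 hwI v (by simp [hv, hB])
    · rfl

end supported

section levels

variable {ι : Type*} {s : Finset ι} {A : ι → Set V} {p : ι → Submodule k ((v : V) → U v)}

lemma biSup_inf_supported (hA : (s : Set ι).PairwiseDisjoint A)
    (hp : ∀ i ∈ s, p i ≤ supported k U (A i)) (I : Set V) :
    (⨆ i ∈ s, p i) ⊓ supported k U I = ⨆ i ∈ s, (p i ⊓ supported k U I) := by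
  refine le_antisymm ?_ (iSup₂_le fun i hi => inf_le_inf_right _ (le_biSup p hi))
  rintro x ⟨hx, hxI⟩
  obtain ⟨μ, rfl⟩ := (Submodule.mem_iSup_finset_iff_exists_sum p x).1 hx
  have hcomponent : ∀ i ∈ s, projEnd k U (A i) (∑ j ∈ s, (μ j : (v : V) → U v)) = μ i := by
    intro i hi
    rw [map_sum, Finset.sum_eq_single_of_mem i hi fun j hj hji =>
      projEnd_eq_zero_of_mem (hp j hj (μ j).2) (hA hi hj hji.symm)]
    exact projEnd_eq_self_of_mem (hp i hi (μ i).2)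
  exact Submodule.sum_mem_biSup fun i hi =>
    ⟨(μ i).2, hcomponent i hi ▸ projEnd_mem_supported_of_mem hxI⟩

lemma finrank_biSup_eq_sum [∀ i, FiniteDimensional k (p i)]
    (hA : (s : Set ι).PairwiseDisjoint A) (hp : ∀ i ∈ s, p i ≤ supported k U (A i)) :
    finrank k ↥(⨆ i ∈ s, p i) = ∑ i ∈ s, finrank k (p i) := by
  induction s using Finset.induction_on with
  | empty =>
    rw [show (⨆ i ∈ (∅ : Finset ι), p i) = ⊥ by simp, finrank_bot, Finset.sum_empty]
  | insert a s ha ih =>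
    rw [Finset.coe_insert] at hA
    have hsupport : (⨆ i ∈ s, p i) ≤ supported k U (⋃ i ∈ s, A i) :=
      iSup₂_le fun i hi => (hp i (Finset.mem_insert_of_mem hi)).trans
        (supported_mono (Set.subset_biUnion_of_mem (u := A) (Finset.mem_coe.2 hi)))
    have hsets : Disjoint (A a) (⋃ i ∈ s, A i) :=
      Set.disjoint_iUnion₂_right.2 fun i hi =>
        hA (Set.mem_insert a _) (Set.mem_insert_of_mem a hi) fun hai => ha (hai ▸ hi)
    have hdisj : Disjoint (p a) (⨆ i ∈ s, p i) :=
      (disjoint_supported hsets).mono (hp a (Finset.mem_insert_self a s)) hsupport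
    have := Submodule.finiteDimensional_finset_sup s p
    rw [Finset.sup_eq_iSup] at this
    rw [Finset.iSup_insert, Finset.sum_insert ha,
      ← ih (hA.subset (Set.subset_insert a _)) fun i hi => hp i (Finset.mem_insert_of_mem hi),
      ← Submodule.finrank_sup_add_finrank_inf_eq, hdisj.eq_bot, finrank_bot, add_zero]

end levels

/-- A single step `G = F_{n-1} ⊆ F = F_n` of the filtration, where `π_n = F ∖ G`. -/
lemma finrank_map_projEnd_inf_supported (W : Submodule k ((v : V) → U v))
    [FiniteDimensional k W] {F G : Set V} (hGF : G ⊆ F) (I : Set V) :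
    (finrank k ↥((W ⊓ supported k U F).map (projEnd k U (F \ G)) ⊓ supported k U I) : ℤ) =
      finrank k ↥(W ⊓ supported k U ((I ∩ F) ∪ G)) - finrank k ↥(W ⊓ supported k U G) := by
  have hsource : F ∩ (I ∪ (F \ G)ᶜ) = (I ∩ F) ∪ G := by
    ext v
    have := @hGF v
    simp only [Set.mem_inter_iff, Set.mem_union, Set.mem_compl_iff, Set.mem_sdiff]
    tauto
  have hkernel : ((I ∩ F) ∪ G) ∩ (F \ G)ᶜ = G := by
    ext v
    have := @hGF v
    simp only [Set.mem_inter_iff, Set.mem_union, Set.mem_compl_iff, Set.mem_sdiff]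
    tauto
  have hrank := Submodule.finrank_map_add_finrank_inf_ker (projEnd k U (F \ G))
    (W ⊓ supported k U ((I ∩ F) ∪ G))
  rw [ker_projEnd, inf_assoc, supported_inf_supported, hkernel] at hrank
  rw [map_projEnd_inf_supported, inf_assoc, supported_inf_supported, hsource]
  omega

end

theorem stmt10_general (W : Submodule k ((v : V) → U v)) [FiniteDimensional k ↥W]
    (r : ℕ) (h : V → ℕ) :
    ∀ I : Set V,
      (Module.finrank k
          ↥((⨆ n ∈ Finset.Icc 1 r,
                (W ⊓ LinearMap.ker (projEnd k U ({v | h v ≤ n}ᶜ))).map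
                  (projEnd k U {v | h v = n})) ⊓
              LinearMap.ker (projEnd k U Iᶜ)) : ℤ) =
        ∑ n ∈ Finset.Icc 1 r,
          ((Module.finrank k
              ↥(W ⊓ LinearMap.ker
                  (projEnd k U (((I ∩ {v | h v ≤ n}) ∪ {v | h v ≤ n - 1})ᶜ))) : ℤ) -
            (Module.finrank k
              ↥(W ⊓ LinearMap.ker (projEnd k U ({v | h v ≤ n - 1}ᶜ))) : ℤ)) := by
  intro I
  have hlevel : ∀ n ∈ Finset.Icc 1 r, {v | h v = n} = {v | h v ≤ n} \ {v | h v ≤ n - 1} := by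
    intro n hn
    ext v
    simp only [Finset.mem_Icc] at hn
    simp only [Set.mem_ofPred_eq, Set.mem_sdiff]
    omega
  have hdisj : (↑(Finset.Icc 1 r) : Set ℕ).PairwiseDisjoint fun n => {v | h v = n} :=
    fun m _ n _ hmn => Set.disjoint_left.2 fun v hm hn => hmn (hm.symm.trans hn)
  have hWn : ∀ n, (W ⊓ LinearMap.ker (projEnd k U ({v | h v ≤ n}ᶜ))).map
      (projEnd k U {v | h v = n}) ≤ supported k U {v | h v = n} :=
    fun n => Submodule.map_le_iff_le_comap.2 fun _ _ => projEnd_mem_supported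
  rw [ker_projEnd, compl_compl, biSup_inf_supported hdisj fun n _ => hWn n,
    finrank_biSup_eq_sum hdisj fun n _ => inf_le_left.trans (hWn n)]
  push_cast
  refine Finset.sum_congr rfl fun n hn => ?_
  rw [ker_projEnd, ker_projEnd, ker_projEnd, compl_compl, compl_compl, compl_compl, hlevel n hn]
  exact finrank_map_projEnd_inf_supported W (fun v hv => le_trans hv (Nat.sub_le n 1)) I

/-- Realization of the splitting: for an ordered partition `π` of `V` given by the level
function `h : V → [r]`, with filtration `F_n = {v | h v ≤ n}`, the subspace
`W(π) = ⊕_n proj_{π_n}(W^{F_n})` has supermodular function `ν_{W(π)}` equal to the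
splitting `(ν_W)_π = Σ_n (ν_W)_{F_n/F_{n−1}}` of `ν_W`. -/
theorem stmt10 (W : Submodule k ((v : V) → U v)) [FiniteDimensional k ↥W]
    (r : ℕ) (h : V → ℕ) (hlev : ∀ v, 1 ≤ h v ∧ h v ≤ r)
    (hsurj : ∀ n, 1 ≤ n → n ≤ r → ∃ v, h v = n) :
    ∀ I : Set V,
      (Module.finrank k
          ↥((⨆ n ∈ Finset.Icc 1 r,
                (W ⊓ LinearMap.ker (projEnd k U ({v | h v ≤ n}ᶜ))).map
                  (projEnd k U {v | h v = n})) ⊓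
              LinearMap.ker (projEnd k U Iᶜ)) : ℤ) =
        ∑ n ∈ Finset.Icc 1 r,
          ((Module.finrank k
              ↥(W ⊓ LinearMap.ker
                  (projEnd k U (((I ∩ {v | h v ≤ n}) ∪ {v | h v ≤ n - 1})ᶜ))) : ℤ) -
            (Module.finrank k
              ↥(W ⊓ LinearMap.ker (projEnd k U ({v | h v ≤ n - 1}ᶜ))) : ℤ)) :=
  stmt10_general W r h
end

section
/- Let (G, π) be a level graph. The subspace Υ⁰_π ⊆ Υ_π cut out by the local residue conditions Σ_{a ∈ 𝔼_v} ψ_a = 0 for all v ∈ V has codimension |V| − s_ir in Υ_π, where s_ir is the number of irreducible summits (vertices v all of whose incident arrows are downward). -/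
attribute [local instance] Classical.propDecidable

open Finset

variable {V E : Type*} [Fintype V] [Fintype E]

/-- The tail of an arrow: the edge `e` with endpoints `ends e = (u, w)` gives the two
arrows `(e, false) : u → w` and `(e, true) : w → u`. -/
def tl (ends : E → V × V) (a : E × Bool) : V :=
  if a.2 then (ends a.1).2 else (ends a.1).1

/-- The reversal of an arrow. -/
def rev {E : Type*} (a : E × Bool) : E × Bool := (a.1, !a.2)

/-- The head of an arrow. -/
def hd (ends : E → V × V) (a : E × Bool) : V := tl ends (rev a)

/-- The space `Υ_π` of functions on arrows vanishing on all downward arrows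
(arrows `u → v` with `h u < h v`). -/
noncomputable def Ups (k : Type*) [Field k] (ends : E → V × V) (h : V → ℕ) :
    Submodule k ((E × Bool) → k) :=
  ⨅ a ∈ {a : E × Bool | h (tl ends a) < h (hd ends a)},
    LinearMap.ker (LinearMap.proj (R := k) (φ := fun _ : E × Bool => k) a)

/-- The linear functional `ψ ↦ Σ_{a ∈ 𝔼_v} ψ_a` summing the coordinates over the arrows
with tail `v`. -/
noncomputable def locF (k : Type*) [Field k] (ends : E → V × V) (v : V) :
    ((E × Bool) → k) →ₗ[k] k :=
  ∑ a ∈ Finset.univ.filter fun a : E × Bool => tl ends a = v,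
    LinearMap.proj (R := k) (φ := fun _ : E × Bool => k) a

/-- The space `Υ⁰_π`: vanishing on downward arrows together with the local residue
conditions at every vertex. -/
noncomputable def Ups0 (k : Type*) [Field k] (ends : E → V × V) (h : V → ℕ) :
    Submodule k ((E × Bool) → k) :=
  Ups k ends h ⊓ ⨅ v : V, LinearMap.ker (locF k ends v)


lemma mem_Ups_iff {k : Type*} [Field k] (ends : E → V × V) (h : V → ℕ)
    (ψ : (E × Bool) → k) :
    ψ ∈ Ups k ends h ↔ ∀ a : E × Bool, h (tl ends a) < h (hd ends a) → ψ a = 0 := by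
  simp [Ups, Submodule.mem_iInf, LinearMap.mem_ker]

lemma locF_apply {k : Type*} [Field k] (ends : E → V × V) (v : V) (ψ : (E × Bool) → k) :
    locF k ends v ψ = ∑ a ∈ Finset.univ.filter (fun a : E × Bool => tl ends a = v), ψ a := by
  simp [locF]


set_option maxHeartbeats 1000000 in
set_option synthInstance.maxHeartbeats 1000000 in
/-- `codim(Υ⁰_π, Υ_π) = |V| − s_ir`, where `s_ir` counts the irreducible summits: the
vertices all of whose incident arrows are downward. -/
theorem stmt13 (k : Type*) [Field k] (ends : E → V × V) (h : V → ℕ) :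
    Module.finrank k ↥(Ups k ends h) =
      Module.finrank k ↥(Ups0 k ends h) +
        (Fintype.card V -
          (Finset.univ.filter fun v : V =>
            ∀ a : E × Bool, tl ends a = v → h v < h (hd ends a)).card) := by
  classical
  set S : Finset V := Finset.univ.filter fun v : V =>
      ∀ a : E × Bool, tl ends a = v → h v < h (hd ends a) with hS
  set L : ((E × Bool) → k) →ₗ[k] (V → k) := LinearMap.pi (fun v => locF k ends v) with hL
  set U : Submodule k ((E × Bool) → k) := Ups k ends h with hU
  set L' : U →ₗ[k] (V → k) := L.domRestrict U with hL'
  set P : (V → k) →ₗ[k] ({v : V // v ∈ S} → k) :=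
      LinearMap.funLeft k k ((↑) : {v : V // v ∈ S} → V) with hP
  have hrank : Module.finrank k (LinearMap.range L') + Module.finrank k (LinearMap.ker L')
      = Module.finrank k U := LinearMap.finrank_range_add_finrank_ker L'
  -- kernel = Ups0
  have hker : LinearMap.ker L' = Submodule.comap U.subtype (Ups0 k ends h) := by
    ext x
    simp only [LinearMap.mem_ker, Submodule.mem_comap, Submodule.coe_subtype, Ups0,
      Submodule.mem_inf, Submodule.mem_iInf, LinearMap.mem_ker, hL', LinearMap.domRestrict_apply,
      hL, LinearMap.pi_apply, funext_iff, Pi.zero_apply]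
    constructor
    · intro hx
      exact ⟨x.2, hx⟩
    · intro hx
      exact hx.2
  have hkerrank : Module.finrank k (LinearMap.ker L') = Module.finrank k (Ups0 k ends h) := by
    rw [hker]
    exact (Submodule.comapSubtypeEquivOfLe (inf_le_left :
      Ups0 k ends h ≤ Ups k ends h)).finrank_eq
  -- range = ker P
  have hSmem : ∀ v : V, v ∈ S ↔ ∀ a : E × Bool, tl ends a = v → h v < h (hd ends a) := by
    intro v; simp [hS]
  have hrange : LinearMap.range L' = LinearMap.ker P := by
    apply le_antisymm
    · rintro _ ⟨⟨ψ, hψ⟩, rfl⟩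
      rw [hU, mem_Ups_iff] at hψ
      simp only [LinearMap.mem_ker, hP, LinearMap.funLeft_apply]
      funext s
      obtain ⟨v, hv⟩ := s
      have hv' := (hSmem v).1 hv
      simp only [hL', LinearMap.domRestrict_apply, hL, LinearMap.funLeft_apply,
        LinearMap.pi_apply, locF_apply, Pi.zero_apply]
      apply Finset.sum_eq_zero
      intro a ha
      simp only [Finset.mem_filter] at ha
      exact hψ a (ha.2 ▸ hv' a ha.2)
    · intro f hf
      simp only [LinearMap.mem_ker, hP, LinearMap.funLeft_apply, funext_iff,
        Pi.zero_apply] at hf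
      have hf' : ∀ v ∈ S, f v = 0 := fun v hv => hf ⟨v, hv⟩
      set g : V → (E × Bool) → k := fun v =>
        if hv : ∃ a : E × Bool, tl ends a = v ∧ ¬ h (tl ends a) < h (hd ends a) then
          Pi.single hv.choose 1 else 0 with hg
      set ψ : (E × Bool) → k := ∑ v : V, f v • g v with hψdef
      have hgU : ∀ v, g v ∈ Ups k ends h := by
        intro v
        rw [mem_Ups_iff]
        intro a ha
        by_cases hv : ∃ a : E × Bool, tl ends a = v ∧ ¬ h (tl ends a) < h (hd ends a)
        · simp only [hg]
          rw [dif_pos hv]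
          have hnd := hv.choose_spec.2
          have hne : a ≠ hv.choose := by rintro rfl; exact hnd ha
          exact Pi.single_eq_of_ne hne 1
        · simp only [hg]
          rw [dif_neg hv]
          rfl
      have hψU : ψ ∈ U := by
        rw [hψdef, hU]
        exact Submodule.sum_mem _ fun v _ => Submodule.smul_mem _ _ (hgU v)
      refine ⟨⟨ψ, hψU⟩, ?_⟩
      simp only [hL', LinearMap.domRestrict_apply]
      funext w
      simp only [hL, LinearMap.pi_apply, locF_apply, hψdef]
      have hswap : ∑ a ∈ Finset.univ.filter (fun a : E × Bool => tl ends a = w),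
          (∑ v : V, f v • g v) a
          = ∑ v : V, f v * (∑ a ∈ Finset.univ.filter
              (fun a : E × Bool => tl ends a = w), g v a) := by
        simp only [Finset.sum_apply, Pi.smul_apply, smul_eq_mul, Finset.mul_sum]
        exact Finset.sum_comm
      rw [hswap]
      have hterm : ∀ v : V, f v * (∑ a ∈ Finset.univ.filter
          (fun a : E × Bool => tl ends a = w), g v a) = if v = w then f v else 0 := by
        intro v
        by_cases hv : ∃ a : E × Bool, tl ends a = v ∧ ¬ h (tl ends a) < h (hd ends a)
        · have htl : tl ends hv.choose = v := hv.choose_spec.1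
          have hsum : ∑ a ∈ Finset.univ.filter (fun a : E × Bool => tl ends a = w), g v a
              = if v = w then 1 else 0 := by
            simp only [hg]
            rw [dif_pos hv]
            by_cases hvw : v = w
            · subst hvw
              rw [if_pos rfl]
              rw [Finset.sum_eq_single_of_mem hv.choose (Finset.mem_filter.2 ⟨Finset.mem_univ _, htl⟩)]
              · exact Pi.single_eq_same _ _
              · intro b _ hne
                exact Pi.single_eq_of_ne hne 1
            · rw [if_neg hvw]
              apply Finset.sum_eq_zero
              intro b hb
              simp only [Finset.mem_filter] at hb
              have hne : b ≠ hv.choose := by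
                rintro rfl
                exact hvw (htl.symm.trans hb.2)
              exact Pi.single_eq_of_ne hne 1
          rw [hsum]
          by_cases hvw : v = w <;> simp [hvw]
        · have hvS : v ∈ S := by
            rw [hSmem]
            intro a ha
            by_contra hlt
            exact hv ⟨a, ha, by rw [ha]; exact hlt⟩
          rw [hf' v hvS]
          simp
      rw [Finset.sum_congr rfl fun v _ => hterm v]
      simp
  have hPsurj : Function.Surjective P := by
    rw [hP]
    exact LinearMap.funLeft_surjective_of_injective k k _ Subtype.val_injective
  have hPrank : Module.finrank k (LinearMap.range P) + Module.finrank k (LinearMap.ker P)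
      = Fintype.card V := by
    rw [LinearMap.finrank_range_add_finrank_ker P]
    simp [Module.finrank_pi]
  have hPtop : LinearMap.range P = ⊤ := LinearMap.range_eq_top.2 hPsurj
  have hcardS : Module.finrank k (LinearMap.range P) = S.card := by
    rw [hPtop, finrank_top]
    simp [Module.finrank_pi, Fintype.card_coe]
  have hrangerank : Module.finrank k (LinearMap.range L') = Fintype.card V - S.card := by
    rw [hrange]; omega
  omega
end

section
/- Let G be a connected level graph (G, π) with a unique summit. Then the global residue conditions (R4) are implied by conditions (R1)–(R3); that is, the space 𝓡_π cut out by (R1)–(R3) equals the residue space 𝒢_π cut out by (R1)–(R4). -/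
attribute [local instance] Classical.propDecidable

open Finset

variable {V E : Type*} [Fintype V] [Fintype E]

/-- The underlying adjacency graph of the multigraph `(V, E, ends)`. -/
def adjG (ends : E → V × V) : SimpleGraph V :=
  SimpleGraph.fromRel fun u w => ∃ e, ends e = (u, w)

/-- The space cut out by the Rosenlicht conditions `ψ_a + ψ_{ā} = 0` on horizontal
arrows. -/
noncomputable def Ros (k : Type*) [Field k] (ends : E → V × V) (h : V → ℕ) :
    Submodule k ((E × Bool) → k) :=
  ⨅ a ∈ {a : E × Bool | h (tl ends a) = h (hd ends a)},
    LinearMap.ker (LinearMap.proj (R := k) (φ := fun _ : E × Bool => k) a +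
      LinearMap.proj (R := k) (φ := fun _ : E × Bool => k) (rev a))

/-- The linear functional summing the coordinates over the upward arrows with tail of
level `n` and head in the connected component `C` of the subgraph induced on vertices of
level `< n`. -/
noncomputable def globF (k : Type*) [Field k] (ends : E → V × V) (h : V → ℕ) (n : ℕ)
    (C : ((adjG ends).induce {v : V | h v < n}).ConnectedComponent) :
    ((E × Bool) → k) →ₗ[k] k :=
  ∑ a ∈ Finset.univ.filter fun a : E × Bool =>
      h (tl ends a) = n ∧
        ∃ hm : hd ends a ∈ {v : V | h v < n},
          ((adjG ends).induce {v : V | h v < n}).connectedComponentMk ⟨hd ends a, hm⟩ = C,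
    LinearMap.proj (R := k) (φ := fun _ : E × Bool => k) a

/-- The space cut out by the global residue conditions (R4). -/
noncomputable def Glob (k : Type*) [Field k] (ends : E → V × V) (h : V → ℕ) :
    Submodule k ((E × Bool) → k) :=
  ⨅ n : ℕ, ⨅ C : ((adjG ends).induce {v : V | h v < n}).ConnectedComponent,
    LinearMap.ker (globF k ends h n C)

/-- The space `𝓡_π` cut out by conditions (R1)–(R3). -/
noncomputable def RSpace (k : Type*) [Field k] (ends : E → V × V) (h : V → ℕ) :
    Submodule k ((E × Bool) → k) :=
  Ups0 k ends h ⊓ Ros k ends h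

/-- The residue space `𝒢_π` cut out by conditions (R1)–(R4). -/
noncomputable def ResSpace (k : Type*) [Field k] (ends : E → V × V) (h : V → ℕ) :
    Submodule k ((E × Bool) → k) :=
  RSpace k ends h ⊓ Glob k ends h

/-- A connected component `C` of the subgraph induced on the level-`n` vertices is a
summit if none of its vertices is the tail of an upward arrow. -/
def IsSummit (ends : E → V × V) (h : V → ℕ) (n : ℕ)
    (C : ((adjG ends).induce {v : V | h v = n}).ConnectedComponent) : Prop :=
  ∀ u : {v : V | h v = n},
    ((adjG ends).induce {v : V | h v = n}).connectedComponentMk u = C →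
      ∀ a : E × Bool, tl ends a = ↑u → ¬ h (hd ends a) < h (↑u : V)

/-- The total number of summits of the level graph. -/
noncomputable def numSummits (ends : E → V × V) (h : V → ℕ) : ℕ :=
  Nat.card ((n : ℕ) ×
    {C : ((adjG ends).induce {v : V | h v = n}).ConnectedComponent //
      IsSummit ends h n C})

/-! ### Auxiliary lemmas -/

lemma rev_rev {E : Type*} (a : E × Bool) : rev (rev a) = a := by
  cases a; simp [rev]

lemma tl_rev (ends : E → V × V) (a : E × Bool) : tl ends (rev a) = hd ends a := rfl

lemma hd_rev (ends : E → V × V) (a : E × Bool) : hd ends (rev a) = tl ends a := by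
  rw [hd, rev_rev]

lemma adj_of_arrow (ends : E → V × V) {a : E × Bool} (hne : tl ends a ≠ hd ends a) :
    (adjG ends).Adj (tl ends a) (hd ends a) := by
  rw [adjG, SimpleGraph.fromRel_adj]
  refine ⟨hne, ?_⟩
  rcases a with ⟨e, b⟩
  cases b
  · exact Or.inl ⟨e, by simp [tl, hd, rev]⟩
  · exact Or.inr ⟨e, by simp [tl, hd, rev]⟩

lemma exists_summit (ends : E → V × V) (h : V → ℕ) (n : ℕ)
    (C : ((adjG ends).induce {v : V | h v < n}).ConnectedComponent) :
    ∃ (m : ℕ) (D : ((adjG ends).induce {v : V | h v = m}).ConnectedComponent)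
      (_ : IsSummit ends h m D) (u : V) (hun : u ∈ {v : V | h v < n})
      (hum : u ∈ {v : V | h v = m}),
      ((adjG ends).induce {v : V | h v < n}).connectedComponentMk ⟨u, hun⟩ = C ∧
      ((adjG ends).induce {v : V | h v = m}).connectedComponentMk ⟨u, hum⟩ = D := by
  classical
  have hP : ∃ m : ℕ, ∃ u : {v : V | h v < n},
      ((adjG ends).induce {v : V | h v < n}).connectedComponentMk u = C ∧ h ↑u = m := by
    obtain ⟨u, hu⟩ := C.exists_rep
    exact ⟨h ↑u, u, hu, rfl⟩
  set m := Nat.find hP with hm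
  obtain ⟨u₀, hu₀C, hu₀m⟩ := Nat.find_spec hP
  have hmin : ∀ u : {v : V | h v < n},
      ((adjG ends).induce {v : V | h v < n}).connectedComponentMk u = C → m ≤ h ↑u := by
    intro u hu
    by_contra hlt
    exact Nat.find_min hP (lt_of_not_ge hlt) ⟨u, hu, rfl⟩
  have hmn : m < n := by
    have := u₀.2
    rw [Set.mem_setOf_eq] at this
    omega
  have hsub' : {v : V | h v = m} ⊆ {v : V | h v < n} := by
    intro v hv
    rw [Set.mem_setOf_eq] at hv ⊢
    omega
  have key : ∀ w : {v : V | h v = m},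
      ((adjG ends).induce {v : V | h v = m}).connectedComponentMk w =
        ((adjG ends).induce {v : V | h v = m}).connectedComponentMk ⟨↑u₀, hu₀m⟩ →
      ((adjG ends).induce {v : V | h v < n}).connectedComponentMk ⟨↑w, hsub' w.2⟩ = C := by
    intro w hw
    have hr := SimpleGraph.ConnectedComponent.exact hw
    have hr' := hr.map ((adjG ends).induceHomOfLE hsub').toHom
    refine (SimpleGraph.ConnectedComponent.sound ?_).trans hu₀C
    exact hr'
  refine ⟨m, ((adjG ends).induce {v : V | h v = m}).connectedComponentMk ⟨↑u₀, hu₀m⟩,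
    ?_, ↑u₀, u₀.2, hu₀m, hu₀C, rfl⟩
  intro w hwD a hta hlt
  have hwC := key w hwD
  have hwm : h (↑w : V) = m := w.2
  have hhd : hd ends a ∈ {v : V | h v < n} := by
    rw [Set.mem_setOf_eq]
    omega
  have hne : tl ends a ≠ hd ends a := by
    intro hcon
    rw [hta] at hcon
    rw [← hcon] at hlt
    exact lt_irrefl _ hlt
  have hadj : (adjG ends).Adj (↑w : V) (hd ends a) := by
    have := adj_of_arrow ends hne
    rwa [hta] at this
  have hadj' : ((adjG ends).induce {v : V | h v < n}).Adj ⟨↑w, hsub' w.2⟩ ⟨hd ends a, hhd⟩ :=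
    hadj
  have hhdC : ((adjG ends).induce {v : V | h v < n}).connectedComponentMk ⟨hd ends a, hhd⟩ = C :=
    (SimpleGraph.ConnectedComponent.connectedComponentMk_eq_of_adj hadj'.symm).trans hwC
  have := hmin ⟨hd ends a, hhd⟩ hhdC
  simp only at this
  omega

lemma comp_subsingleton (ends : E → V × V) (h : V → ℕ)
    (hsummit : numSummits ends h = 1) (n : ℕ) :
    Subsingleton ((adjG ends).induce {v : V | h v < n}).ConnectedComponent := by
  have hsub : Subsingleton ((m : ℕ) ×
      {C : ((adjG ends).induce {v : V | h v = m}).ConnectedComponent //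
        IsSummit ends h m C}) :=
    (Nat.card_eq_one_iff_unique.mp hsummit).1
  constructor
  intro C₁ C₂
  obtain ⟨m₁, D₁, hD₁, u₁, hun₁, hum₁, hC₁, hDeq₁⟩ := exists_summit ends h n C₁
  obtain ⟨m₂, D₂, hD₂, u₂, hun₂, hum₂, hC₂, hDeq₂⟩ := exists_summit ends h n C₂
  have hs : (⟨m₁, ⟨D₁, hD₁⟩⟩ : (m : ℕ) ×
      {C : ((adjG ends).induce {v : V | h v = m}).ConnectedComponent //
        IsSummit ends h m C}) = ⟨m₂, ⟨D₂, hD₂⟩⟩ := Subsingleton.elim _ _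
  obtain ⟨hm, hD⟩ := Sigma.mk.inj_iff.mp hs
  subst hm
  have hDD : D₁ = D₂ := congrArg Subtype.val (eq_of_heq hD)
  have hr := SimpleGraph.ConnectedComponent.exact ((hDeq₁.trans hDD).trans hDeq₂.symm)
  have hsub' : {v : V | h v = m₁} ⊆ {v : V | h v < n} := by
    intro v hv
    rw [Set.mem_setOf_eq] at hv ⊢
    have h1 : h u₁ = m₁ := hum₁
    have h2 : h u₁ < n := hun₁
    omega
  have hr' := hr.map ((adjG ends).induceHomOfLE hsub').toHom
  rw [← hC₁, ← hC₂]
  exact SimpleGraph.ConnectedComponent.sound hr'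

lemma mem_RSpace_props (k : Type*) [Field k] (ends : E → V × V) (h : V → ℕ)
    {ψ : (E × Bool) → k} (hψ : ψ ∈ RSpace k ends h) :
    (∀ a, h (tl ends a) < h (hd ends a) → ψ a = 0) ∧
    (∀ v, ∑ a ∈ Finset.univ.filter (fun a : E × Bool => tl ends a = v), ψ a = 0) ∧
    (∀ a, h (tl ends a) = h (hd ends a) → ψ a + ψ (rev a) = 0) := by
  rw [RSpace, Ups0, Submodule.mem_inf, Submodule.mem_inf] at hψ
  obtain ⟨⟨h1, h2⟩, h3⟩ := hψ
  refine ⟨?_, ?_, ?_⟩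
  · intro a ha
    simp only [Ups, Submodule.mem_iInf, LinearMap.mem_ker, LinearMap.proj_apply,
      Set.mem_setOf_eq] at h1
    exact h1 a ha
  · intro v
    simp only [Submodule.mem_iInf, LinearMap.mem_ker, locF, LinearMap.coe_sum,
      Finset.sum_apply, LinearMap.proj_apply] at h2
    exact h2 v
  · intro a ha
    simp only [Ros, Submodule.mem_iInf, LinearMap.mem_ker, LinearMap.add_apply,
      LinearMap.proj_apply, Set.mem_setOf_eq] at h3
    exact h3 a ha

lemma sum_upward_lt (k : Type*) [Field k] (ends : E → V × V) (h : V → ℕ)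
    {ψ : (E × Bool) → k} (hψ : ψ ∈ RSpace k ends h) (n : ℕ) :
    ∑ a ∈ Finset.univ.filter
      (fun a : E × Bool => h (hd ends a) < h (tl ends a) ∧ h (tl ends a) < n), ψ a = 0 := by
  obtain ⟨h1, h2, h3⟩ := mem_RSpace_props k ends h hψ
  set S := Finset.univ.filter (fun a : E × Bool => h (tl ends a) < n) with hS
  have h0 : ∑ a ∈ S, ψ a = 0 := by
    rw [← Finset.sum_fiberwise_of_maps_to (t := Finset.univ.filter fun v => h v < n)
      (g := tl ends) (fun a ha => by
        simp only [Finset.mem_filter, Finset.mem_univ, true_and, hS] at ha ⊢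
        exact ha) ψ]
    apply Finset.sum_eq_zero
    intro v hv
    have hv' : h v < n := (Finset.mem_filter.mp hv).2
    have hfe : S.filter (fun a => tl ends a = v) =
        Finset.univ.filter (fun a : E × Bool => tl ends a = v) := by
      ext a
      simp only [hS, Finset.filter_filter, Finset.mem_filter, Finset.mem_univ, true_and]
      constructor
      · exact And.right
      · intro ht
        exact ⟨ht ▸ hv', ht⟩
    rw [hfe]
    exact h2 v
  have e1 : ∑ a ∈ S.filter (fun a => h (tl ends a) < h (hd ends a)), ψ a = 0 :=
    Finset.sum_eq_zero fun a ha => h1 a (Finset.mem_filter.mp ha).2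
  have e2 : ∑ a ∈ (S.filter (fun a => ¬ h (tl ends a) < h (hd ends a))).filter
      (fun a => h (tl ends a) = h (hd ends a)), ψ a = 0 := by
    refine Finset.sum_involution (fun a _ => rev a) ?_ ?_ ?_ ?_
    · intro a ha
      exact h3 a (Finset.mem_filter.mp ha).2
    · intro a _ _
      intro hcon
      exact Bool.not_ne_self a.2 (congrArg Prod.snd hcon)
    · intro a ha
      simp only [Finset.mem_filter, hS, Finset.mem_univ, true_and] at ha ⊢
      obtain ⟨⟨hlt, hnlt⟩, heq⟩ := ha
      rw [tl_rev, hd_rev]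
      exact ⟨⟨by omega, by omega⟩, heq.symm⟩
    · intro a _
      exact rev_rev a
  have hsplit := Finset.sum_filter_add_sum_filter_not S
    (fun a => h (tl ends a) < h (hd ends a)) ψ
  have hsplit2 := Finset.sum_filter_add_sum_filter_not
    (S.filter (fun a => ¬ h (tl ends a) < h (hd ends a)))
    (fun a => h (tl ends a) = h (hd ends a)) ψ
  rw [h0, e1, zero_add] at hsplit
  rw [hsplit, e2, zero_add] at hsplit2
  have hset : (S.filter (fun a => ¬ h (tl ends a) < h (hd ends a))).filter
      (fun a => ¬ h (tl ends a) = h (hd ends a)) =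
      Finset.univ.filter
        (fun a : E × Bool => h (hd ends a) < h (tl ends a) ∧ h (tl ends a) < n) := by
    ext a
    simp only [hS, Finset.filter_filter, Finset.mem_filter, Finset.mem_univ, true_and]
    omega
  rw [← hset]
  exact hsplit2

lemma sum_level (k : Type*) [Field k] (ends : E → V × V) (h : V → ℕ)
    {ψ : (E × Bool) → k} (hψ : ψ ∈ RSpace k ends h) (n : ℕ) :
    ∑ a ∈ Finset.univ.filter
      (fun a : E × Bool => h (tl ends a) = n ∧ h (hd ends a) < n), ψ a = 0 := by
  have t1 := sum_upward_lt k ends h hψ n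
  have t2 := sum_upward_lt k ends h hψ (n + 1)
  have hsplit := Finset.sum_filter_add_sum_filter_not
    (Finset.univ.filter
      (fun a : E × Bool => h (hd ends a) < h (tl ends a) ∧ h (tl ends a) < n + 1))
    (fun a => h (tl ends a) < n) ψ
  have hA : (Finset.univ.filter
      (fun a : E × Bool => h (hd ends a) < h (tl ends a) ∧ h (tl ends a) < n + 1)).filter
      (fun a => h (tl ends a) < n) =
      Finset.univ.filter
        (fun a : E × Bool => h (hd ends a) < h (tl ends a) ∧ h (tl ends a) < n) := by
    ext a
    simp only [Finset.filter_filter, Finset.mem_filter, Finset.mem_univ, true_and]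
    omega
  have hB : (Finset.univ.filter
      (fun a : E × Bool => h (hd ends a) < h (tl ends a) ∧ h (tl ends a) < n + 1)).filter
      (fun a => ¬ h (tl ends a) < n) =
      Finset.univ.filter
        (fun a : E × Bool => h (tl ends a) = n ∧ h (hd ends a) < n) := by
    ext a
    simp only [Finset.filter_filter, Finset.mem_filter, Finset.mem_univ, true_and]
    omega
  rw [hA, hB, t1, t2, zero_add] at hsplit
  exact hsplit

/-- For a connected level graph with a unique summit, the global residue conditions are
implied by conditions (R1)–(R3): `𝓡_π = 𝒢_π`. -/
theorem stmt15 (k : Type*) [Field k] (ends : E → V × V) (h : V → ℕ)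
    (hconn : Nat.card (adjG ends).ConnectedComponent = 1)
    (hsummit : numSummits ends h = 1) :
    RSpace k ends h = ResSpace k ends h := by
  have hsub := comp_subsingleton ends h hsummit
  rw [ResSpace, left_eq_inf]
  intro ψ hψ
  simp only [Glob, Submodule.mem_iInf, LinearMap.mem_ker, globF, LinearMap.coe_sum,
    Finset.sum_apply, LinearMap.proj_apply]
  intro n C
  have hfil : (Finset.univ.filter fun a : E × Bool =>
      h (tl ends a) = n ∧ ∃ hm : hd ends a ∈ {v : V | h v < n},
        ((adjG ends).induce {v : V | h v < n}).connectedComponentMk ⟨hd ends a, hm⟩ = C)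
      = Finset.univ.filter
        (fun a : E × Bool => h (tl ends a) = n ∧ h (hd ends a) < n) := by
    ext a
    simp only [Finset.mem_filter, Finset.mem_univ, true_and, Set.mem_setOf_eq]
    constructor
    · rintro ⟨ha1, ha2, -⟩
      exact ⟨ha1, ha2⟩
    · rintro ⟨ha1, ha2⟩
      exact ⟨ha1, ha2, @Subsingleton.elim _ (hsub n) _ _⟩
  rw [hfil]
  exact sum_level k ends h hψ n
end

section
/- Let W be an m-dimensional subspace of a finite-dimensional k-vector space U = ⊕_{v∈V} U_v, let d : V → ℤ, and for λ ∈ k× let x(λ) ∈ (k×)^V act on U by scaling the component U_v by λ^{−d_v}. Let π be the ordered partition of V induced by the level sets of d (ordered by increasing d-value). Then the limit as λ → 0 of the subspaces x(λ)·W in the Grassmannian Grass(m, U) exists and equals W(π) = ⊕_{n=1}^r proj_{π_n}(W ∩ ⊕_{v: d_v ≤ d_n} U_v), where d_1 < ⋯ < d_r are the distinct values of d. -/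
/-!
Write `W^{≤c} = W ∩ ⊕_{d_v ≤ c} U_v`. For `w ∈ W^{≤c}` the rescaled path `t^c • x(t) w` tends
to `proj_{d = c} w`, so every element of `W(π)` is a limit. Conversely, lifting bases of
`proj_{d = c}(W^{≤c})` level by level gives vectors `b_i ∈ W^{≤c_i}` spanning `W` whose leading
terms `ℓ_i = proj_{d = c_i} b_i` are linearly independent. Then `x(t) W` is spanned by
`t^{c_i} x(t) b_i → ℓ_i`, and because the limit family is independent, limits of points of these
spans lie in `span ℓ ≤ W(π)`: the maps `ℝ^ι → U` defined by the families converge to an injective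
one, which a fixed left inverse turns into an eventually invertible endomorphism of `ℝ^ι`.
-/

attribute [local instance] Classical.propDecidable

/-- The coordinate projection of `U = ⊕_v U_v` killing the components outside `I`. -/
noncomputable def projE {V : Type*} (m : V → ℕ) (I : Set V) :
    ((v : V) → Fin (m v) → ℝ) →ₗ[ℝ] ((v : V) → Fin (m v) → ℝ) :=
  LinearMap.pi fun v => if v ∈ I then LinearMap.proj v else 0

/-- The element `x(t) ∈ (k^×)^V` associated to `d : V → ℤ`, acting on `U` by scaling the
component `U_v` by `t^{−d_v}`. -/
noncomputable def xact {V : Type*} (m : V → ℕ) (d : V → ℤ) (t : ℝ) :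
    ((v : V) → Fin (m v) → ℝ) →ₗ[ℝ] ((v : V) → Fin (m v) → ℝ) :=
  LinearMap.pi fun v => t ^ (-(d v)) • LinearMap.proj v

open Filter Set Submodule Topology

section SpanLimit

variable {𝕜 : Type*} [NontriviallyNormedField 𝕜] [CompleteSpace 𝕜]
  {E F : Type*} [NormedAddCommGroup E] [NormedSpace 𝕜 E] [FiniteDimensional 𝕜 E]
  [NormedAddCommGroup F] [NormedSpace 𝕜 F] [FiniteDimensional 𝕜 F]
  {α : Type*} {l : Filter α} [l.NeBot]

theorem mem_range_of_tendsto_of_injective {A : α → F →L[𝕜] E} {A₀ : F →L[𝕜] E}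
    (hA : Tendsto A l (𝓝 A₀)) (hA₀ : Function.Injective A₀) {y : α → E} {u : E}
    (hy : ∀ᶠ t in l, y t ∈ Set.range (A t)) (hu : Tendsto y l (𝓝 u)) :
    u ∈ Set.range A₀ := by
  obtain ⟨L, hL⟩ := (A₀ : F →ₗ[𝕜] E).exists_leftInverse_of_injective
    (LinearMap.ker_eq_bot.2 hA₀)
  have := FiniteDimensional.complete 𝕜 F
  set L' : E →L[𝕜] F := LinearMap.toContinuousLinearMap L
  have hL' : L'.comp A₀ = 1 := ContinuousLinearMap.coe_injective hL
  -- `L' ∘ A t → 1`, so it is eventually invertible and its inverse tends to `1`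
  have hB : Tendsto (fun t => L'.comp (A t)) l (𝓝 1) :=
    hL' ▸ ((ContinuousLinearMap.compL 𝕜 F E F L').continuous.tendsto A₀).comp hA
  have hunit : ∀ᶠ t in l, IsUnit (L'.comp (A t)) :=
    hB.eventually (Units.isOpen.mem_nhds isUnit_one)
  have hinv : Tendsto (fun t => Ring.inverse (L'.comp (A t))) l (𝓝 1) := by
    have h := (NormedRing.inverse_continuousAt (1 : (F →L[𝕜] F)ˣ)).tendsto.comp hB
    rwa [Units.val_one, Ring.inverse_one] at h
  set β := fun t => Ring.inverse (L'.comp (A t)) (L' (y t))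
  have hyβ : ∀ᶠ t in l, A t (β t) = y t := by
    filter_upwards [hy, hunit] with t ⟨x, hx⟩ ht
    have hxβ : β t = x := by
      change Ring.inverse (L'.comp (A t)) (L' (y t)) = x
      rw [← hx, ← ContinuousLinearMap.comp_apply L', ← mul_apply_eq_comp,
        Ring.inverse_mul_cancel _ ht, one_apply_eq_self]
    rw [hxβ, hx]
  have hβ : Tendsto β l (𝓝 (L' u)) := by
    have h := (isBoundedBilinearMap_apply.continuous.tendsto (1, L' u)).comp
      (hinv.prodMk_nhds ((L'.continuous.tendsto u).comp hu))
    rwa [one_apply_eq_self] at h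
  have hAβ : Tendsto (fun t => A t (β t)) l (𝓝 (A₀ (L' u))) :=
    (isBoundedBilinearMap_apply.continuous.tendsto (A₀, L' u)).comp (hA.prodMk_nhds hβ)
  exact ⟨L' u, tendsto_nhds_unique (hAβ.congr' hyβ) hu⟩

theorem mem_span_of_tendsto {ι : Type*} [Fintype ι] {f : α → ι → E} {ℓ : ι → E}
    (hf : Tendsto f l (𝓝 ℓ)) (hℓ : LinearIndependent 𝕜 ℓ) {y : α → E} {u : E}
    (hy : ∀ᶠ t in l, y t ∈ span 𝕜 (range (f t))) (hu : Tendsto y l (𝓝 u)) :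
    u ∈ span 𝕜 (range ℓ) := by
  classical
  let P := (ContinuousLinearEquiv.piRing (𝕜 := 𝕜) (E := E) ι).symm
  have hP : ∀ g, (P g : (ι → 𝕜) →ₗ[𝕜] E) = Fintype.linearCombination 𝕜 g := fun g =>
    LinearMap.ext fun x => by
      rw [Fintype.linearCombination_apply, ← LinearEquiv.piRing_symm_apply g x (S := 𝕜)]
      rfl
  have hrange : ∀ g, Set.range (P g) = span 𝕜 (range g) := fun g => by
    rw [← Fintype.range_linearCombination, ← hP, LinearMap.coe_range, ContinuousLinearMap.coe_coe]
  have hinj : Function.Injective (P ℓ) := by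
    rw [← ContinuousLinearMap.coe_coe, hP]
    exact hℓ.fintypeLinearCombination_injective
  rw [← SetLike.mem_coe, ← hrange]
  exact mem_range_of_tendsto_of_injective ((P.continuous.tendsto ℓ).comp hf) hinj
    (hy.mono fun t ht => by rwa [Function.comp_apply, hrange]) hu
end SpanLimit

section Coordinates

variable {V : Type*} {m : V → ℕ}

theorem projE_apply (I : Set V) (u : (v : V) → Fin (m v) → ℝ) (v : V) :
    projE m I u v = if v ∈ I then u v else 0 := by
  simp only [projE, LinearMap.pi_apply]
  split_ifs <;> rfl

theorem mem_ker_projE {I : Set V} {u : (v : V) → Fin (m v) → ℝ} :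
    u ∈ LinearMap.ker (projE m I) ↔ ∀ v ∈ I, u v = 0 := by
  simp only [LinearMap.mem_ker, funext_iff, projE_apply, Pi.zero_apply]
  exact forall_congr' fun v => by by_cases hv : v ∈ I <;> simp [hv]

theorem projE_mem_ker_projE_compl {I J : Set V} (h : I ⊆ J) (u : (v : V) → Fin (m v) → ℝ) :
    projE m I u ∈ LinearMap.ker (projE m Jᶜ) :=
  mem_ker_projE.2 fun v hv => by rw [projE_apply, if_neg fun hI => hv (h hI)]

theorem disjoint_ker_projE_compl {I J : Set V} (h : Disjoint I J) :
    Disjoint (LinearMap.ker (projE m Iᶜ)) (LinearMap.ker (projE m Jᶜ)) := by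
  rw [Submodule.disjoint_def]
  intro u hI hJ
  funext v
  by_cases hv : v ∈ I
  · exact mem_ker_projE.1 hJ v (Set.disjoint_left.1 h hv)
  · exact mem_ker_projE.1 hI v hv

theorem xact_apply (d : V → ℤ) (t : ℝ) (u : (v : V) → Fin (m v) → ℝ) (v : V) :
    xact m d t u v = t ^ (-(d v)) • u v :=
  rfl

variable (m) in
noncomputable def lowerSubspace (d : V → ℤ) (W : Submodule ℝ ((v : V) → Fin (m v) → ℝ)) (c : ℤ) :
    Submodule ℝ ((v : V) → Fin (m v) → ℝ) :=
  W ⊓ LinearMap.ker (projE m ({v | d v ≤ c}ᶜ))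

section lowerSubspace

variable {d : V → ℤ} {W : Submodule ℝ ((v : V) → Fin (m v) → ℝ)} {c : ℤ}

theorem mem_lowerSubspace {w : (v : V) → Fin (m v) → ℝ} :
    w ∈ lowerSubspace m d W c ↔ w ∈ W ∧ ∀ v, c < d v → w v = 0 := by
  simp only [lowerSubspace, Submodule.mem_inf, mem_ker_projE, Set.mem_compl_iff, Set.mem_ofPred_eq,
    not_le]

theorem lowerSubspace_eq_bot (h : ∀ v, c < d v) : lowerSubspace m d W c = ⊥ :=
  eq_bot_iff.2 fun _ hw => funext fun v => (mem_lowerSubspace.1 hw).2 v (h v)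

theorem le_lowerSubspace (h : ∀ v, d v ≤ c) : W ≤ lowerSubspace m d W c :=
  fun _ hw => mem_lowerSubspace.2 ⟨hw, fun v hv => absurd (h v) (not_le.2 hv)⟩

theorem mem_lowerSubspace_of_projE_eq_zero {w : (v : V) → Fin (m v) → ℝ}
    (hw : w ∈ lowerSubspace m d W (c + 1)) (h : projE m {v | d v = c + 1} w = 0) :
    w ∈ lowerSubspace m d W c := by
  rw [mem_lowerSubspace] at hw ⊢
  refine ⟨hw.1, fun v hv => ?_⟩
  rcases (Int.add_one_le_of_lt hv).eq_or_lt with hv' | hv'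
  · simpa [projE_apply, hv'] using congrFun h v
  · exact hw.2 v hv'

theorem tendsto_zpow_smul_xact {w : (v : V) → Fin (m v) → ℝ} (hw : w ∈ lowerSubspace m d W c) :
    Tendsto (fun t : ℝ => t ^ c • xact m d t w) (𝓝[≠] 0) (𝓝 (projE m {v | d v = c} w)) := by
  rw [tendsto_pi_nhds]
  intro v
  by_cases hv : c < d v
  · simp [xact_apply, projE_apply, (mem_lowerSubspace.1 hw).2 v hv]
  -- the `v`-component is `t ^ (c - d v) • w v` with a nonnegative exponent
  have hlim : Tendsto (fun t : ℝ => t ^ (c - d v) • w v) (𝓝[≠] 0)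
      (𝓝 ((0 : ℝ) ^ (c - d v) • w v)) :=
    ((continuousAt_zpow₀ (0 : ℝ) _ (Or.inr (by omega))).tendsto.mono_left
      nhdsWithin_le_nhds).smul_const _
  have hval : (0 : ℝ) ^ (c - d v) • w v = projE m {v | d v = c} w v := by
    rcases eq_or_ne (d v) c with hvc | hvc
    · simp [projE_apply, hvc]
    · simp [projE_apply, hvc, zero_zpow _ (sub_ne_zero.2 (Ne.symm hvc))]
  rw [← hval]
  refine hlim.congr' (eventually_mem_nhdsWithin.mono fun t (ht : t ≠ 0) => ?_)
  dsimp only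
  rw [Pi.smul_apply, xact_apply, smul_smul, ← zpow_add₀ ht, ← sub_eq_add_neg]

theorem lowerSubspace_succ_le_sup {κ : Type*} [Fintype κ] {b : κ → (v : V) → Fin (m v) → ℝ}
    (hb : ∀ j, b j ∈ lowerSubspace m d W (c + 1))
    (hspan : (lowerSubspace m d W (c + 1)).map (projE m {v | d v = c + 1}) ≤
      span ℝ (range fun j => projE m {v | d v = c + 1} (b j))) :
    lowerSubspace m d W (c + 1) ≤ lowerSubspace m d W c ⊔ span ℝ (range b) := by
  intro w hw
  obtain ⟨a, ha⟩ := (mem_span_range_iff_exists_fun ℝ).1 (hspan (mem_map_of_mem hw))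
  have hrest : w - ∑ j, a j • b j ∈ lowerSubspace m d W c :=
    mem_lowerSubspace_of_projE_eq_zero (sub_mem hw (sum_mem fun j _ => smul_mem _ _ (hb j)))
      (by simp only [map_sub, map_sum, map_smul, ha, sub_self])
  rw [← sub_add_cancel w (∑ j, a j • b j)]
  exact add_mem_sup hrest (sum_mem fun j _ => smul_mem _ _ (subset_span ⟨j, rfl⟩))

theorem disjoint_span_projE_level_le {κ κ' : Type*} (x : κ → (v : V) → Fin (m v) → ℝ)
    (level : κ → ℤ) (hlevel : ∀ i, level i ≤ c) (y : κ' → (v : V) → Fin (m v) → ℝ) :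
    Disjoint (span ℝ (range fun i => projE m {v | d v = level i} (x i)))
      (span ℝ (range fun j => projE m {v | d v = c + 1} (y j))) := by
  refine (disjoint_ker_projE_compl (I := {v | d v ≤ c}) (J := {v | d v = c + 1}) ?_).mono ?_ ?_
  · exact Set.disjoint_left.2 fun v (h₁ : d v ≤ c) (h₂ : d v = c + 1) => by omega
  · rw [span_le]
    rintro _ ⟨i, rfl⟩
    exact projE_mem_ker_projE_compl (fun v (hv : d v = level i) => hv.trans_le (hlevel i)) _
  · rw [span_le]
    rintro _ ⟨j, rfl⟩
    exact projE_mem_ker_projE_compl subset_rfl _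

end lowerSubspace

structure AdaptedFamily (m : V → ℕ) (d : V → ℤ) (W : Submodule ℝ ((v : V) → Fin (m v) → ℝ))
    (n : ℤ) where
  ι : Type
  [fintype : Fintype ι]
  vec : ι → (v : V) → Fin (m v) → ℝ
  level : ι → ℤ
  vec_mem : ∀ i, vec i ∈ lowerSubspace m d W (level i)
  level_le : ∀ i, level i ≤ n
  lowerSubspace_le : lowerSubspace m d W n ≤ span ℝ (range vec)
  linearIndependent_lead : LinearIndependent ℝ fun i => projE m {v | d v = level i} (vec i)

namespace AdaptedFamily

attribute [instance] AdaptedFamily.fintype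

variable {d : V → ℤ} {W : Submodule ℝ ((v : V) → Fin (m v) → ℝ)} {n : ℤ}

noncomputable def lead (F : AdaptedFamily m d W n) (i : F.ι) : (v : V) → Fin (m v) → ℝ :=
  projE m {v | d v = F.level i} (F.vec i)

theorem nonempty_succ [Finite V] (F : AdaptedFamily m d W n) :
    Nonempty (AdaptedFamily m d W (n + 1)) := by
  -- extend `F` by lifts `b` of a basis `β` of the leading terms at level `n + 1`
  set P := (lowerSubspace m d W (n + 1)).map (projE m {v | d v = n + 1})
  let β := Module.finBasis ℝ P
  choose b hb hβ using fun j => Submodule.mem_map.1 (β j).2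
  have hlead : (fun j => projE m {v | d v = n + 1} (b j)) = P.subtype ∘ β := funext hβ
  refine ⟨{ ι := F.ι ⊕ Fin (Module.finrank ℝ P)
            vec := Sum.elim F.vec b
            level := Sum.elim F.level fun _ => n + 1
            vec_mem := ?_
            level_le := ?_
            lowerSubspace_le := ?_
            linearIndependent_lead := ?_ }⟩
  · rintro (i | j)
    exacts [F.vec_mem i, hb j]
  · rintro (i | j)
    exacts [(F.level_le i).trans (Int.le_add_one le_rfl), le_rfl]
  · have hP : P ≤ span ℝ (range fun j => projE m {v | d v = n + 1} (b j)) :=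
      hlead ▸ ((span_range_subtype_eq_top_iff P fun j => (β j).2).1 β.span_eq).ge
    rw [Set.Sum.elim_range, span_union]
    exact (lowerSubspace_succ_le_sup hb hP).trans (sup_le_sup_right F.lowerSubspace_le _)
  · have hsplit : (fun i => projE m {v | d v = Sum.elim F.level (fun _ => n + 1) i}
        (Sum.elim F.vec b i)) = Sum.elim F.lead fun j => projE m {v | d v = n + 1} (b j) := by
      funext i
      rcases i with i | j <;> rfl
    rw [hsplit]
    exact F.linearIndependent_lead.sum_type
      (hlead ▸ β.linearIndependent.map' P.subtype P.ker_subtype)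
      (disjoint_span_projE_level_le F.vec F.level F.level_le b)

theorem nonempty [Finite V] (m : V → ℕ) (d : V → ℤ) (W : Submodule ℝ ((v : V) → Fin (m v) → ℝ))
    (n : ℤ) : Nonempty (AdaptedFamily m d W n) := by
  obtain ⟨M, hM⟩ := Finite.exists_le fun v => -d v
  have hbot : lowerSubspace m d W (min n (-M - 1)) = ⊥ :=
    lowerSubspace_eq_bot fun v => by have := hM v; omega
  have base : Nonempty (AdaptedFamily m d W (min n (-M - 1))) :=
    ⟨{ ι := Empty
       vec := Empty.elim
       level := Empty.elim
       vec_mem := fun i => i.elim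
       level_le := fun i => i.elim
       lowerSubspace_le := hbot ▸ bot_le
       linearIndependent_lead := linearIndependent_empty_type }⟩
  exact Int.leInduction (motive := fun k _ => Nonempty (AdaptedFamily m d W k)) base
    (fun _ _ ⟨F⟩ => F.nonempty_succ) n (min_le_left _ _)

theorem span_lead_le_iSup (F : AdaptedFamily m d W n) :
    span ℝ (range F.lead) ≤ ⨆ c, (lowerSubspace m d W c).map (projE m {v | d v = c}) :=
  span_le.2 <| by
    rintro _ ⟨i, rfl⟩
    exact mem_iSup_of_mem (F.level i) (mem_map_of_mem (F.vec_mem i))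

end AdaptedFamily

variable (m) in
def limitSubmodule (d : V → ℤ) (W : Submodule ℝ ((v : V) → Fin (m v) → ℝ)) :
    Submodule ℝ ((v : V) → Fin (m v) → ℝ) where
  carrier := {u | ∃ y : ℝ → ((v : V) → Fin (m v) → ℝ),
    (∀ t : ℝ, t ≠ 0 → y t ∈ W.map (xact m d t)) ∧ Tendsto y (𝓝[≠] 0) (𝓝 u)}
  zero_mem' := ⟨0, fun _ _ => zero_mem _, tendsto_const_nhds⟩
  add_mem' := by
    rintro _ _ ⟨y₁, hy₁, hu₁⟩ ⟨y₂, hy₂, hu₂⟩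
    exact ⟨y₁ + y₂, fun t ht => add_mem (hy₁ t ht) (hy₂ t ht), hu₁.add hu₂⟩
  smul_mem' := by
    rintro a _ ⟨y, hy, hu⟩
    exact ⟨a • y, fun t ht => smul_mem _ a (hy t ht), hu.const_smul a⟩

section limitSubmodule

variable {d : V → ℤ} {W : Submodule ℝ ((v : V) → Fin (m v) → ℝ)}

theorem map_projE_lowerSubspace_le_limitSubmodule (c : ℤ) :
    (lowerSubspace m d W c).map (projE m {v | d v = c}) ≤ limitSubmodule m d W := by
  rintro _ ⟨w, hw, rfl⟩
  refine ⟨fun t => t ^ c • xact m d t w, fun t _ => ?_, tendsto_zpow_smul_xact hw⟩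
  exact ⟨t ^ c • w, W.smul_mem _ (mem_lowerSubspace.1 hw).1, map_smul _ _ _⟩

theorem AdaptedFamily.limitSubmodule_le [Fintype V] {n : ℤ} (F : AdaptedFamily m d W n)
    (hn : ∀ v, d v ≤ n) :
    limitSubmodule m d W ≤ span ℝ (range F.lead) := by
  rintro u ⟨y, hy, hu⟩
  -- `x(t) W` is spanned by the rescaled `t ^ level i • x(t) (vec i)`, which tend to `lead i`
  let f : ℝ → F.ι → (v : V) → Fin (m v) → ℝ := fun t i => t ^ F.level i • xact m d t (F.vec i)
  have hf : Tendsto f (𝓝[≠] 0) (𝓝 F.lead) :=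
    tendsto_pi_nhds.2 fun i => tendsto_zpow_smul_xact (F.vec_mem i)
  refine mem_span_of_tendsto hf F.linearIndependent_lead ?_ hu
  filter_upwards [self_mem_nhdsWithin] with t (ht : t ≠ 0)
  have hspan : (span ℝ (range F.vec)).map (xact m d t) ≤ span ℝ (range (f t)) := by
    rw [map_span, span_le]
    rintro _ ⟨_, ⟨i, rfl⟩, rfl⟩
    rw [← inv_smul_smul₀ (zpow_ne_zero (F.level i) ht) (xact m d t (F.vec i))]
    exact smul_mem _ _ (subset_span ⟨i, rfl⟩)
  exact hspan (map_mono ((le_lowerSubspace hn).trans F.lowerSubspace_le) (hy t ht))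

end limitSubmodule

end Coordinates

/-- The limit as `t → 0` of the subspaces `x(t)·W` in the Grassmannian (described here
via its set of limit points) is `W(π) = ⊕_c proj_{π_c}(W ∩ ⊕_{d_v ≤ c} U_v)`, where `π`
is the ordered partition of `V` by the level sets of `d`. -/
theorem stmt18 {V : Type*} [Fintype V] (m : V → ℕ) (d : V → ℤ)
    (W : Submodule ℝ ((v : V) → Fin (m v) → ℝ)) :
    ((⨆ c : ℤ,
        (W ⊓ LinearMap.ker (projE m ({v | d v ≤ c}ᶜ))).map (projE m {v | d v = c}) :
        Submodule ℝ ((v : V) → Fin (m v) → ℝ)) : Set ((v : V) → Fin (m v) → ℝ)) =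
      {u | ∃ y : ℝ → ((v : V) → Fin (m v) → ℝ),
        (∀ t : ℝ, t ≠ 0 → y t ∈ W.map (xact m d t)) ∧
          Filter.Tendsto y (nhdsWithin 0 {(0 : ℝ)}ᶜ) (nhds u)} := by
  suffices h : ⨆ c, (lowerSubspace m d W c).map (projE m {v | d v = c}) = limitSubmodule m d W from
    congrArg SetLike.coe h
  obtain ⟨n, hn⟩ := Finite.exists_le d
  obtain ⟨F⟩ := AdaptedFamily.nonempty m d W n
  exact le_antisymm (iSup_le map_projE_lowerSubspace_le_limitSubmodule)
    ((F.limitSubmodule_le hn).trans F.span_lead_le_iSup)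
end
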